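/- For every 3-valued structure S that is an image of canonical abstraction (ICA) and every 2-valued structure S♮: S♮ ∈ γ_c(S) if and only if S♮ ⊨ γ̂_c(S), where γ̂_c(S) = F ∧ τ^S is the first-order characteristic formula for canonical abstraction of S. -/

import Mathlib

/-!
Common framework: 2-valued and 3-valued logical structures over a relational
vocabulary with a designated binary equality predicate, embedding, first-order
formulas with transitive closure and their Tarskian semantics, characteristic
formulas, canonical abstraction.
-/

namespace HeapAbs

/-- The three truth values 0, 1/2, 1. -/
inductive TV : Type
  | zero
  | half
  | one
  deriving DecidableEq

/-- Information order on truth values: `l1 ⊑ l2` iff `l1 = l2` or `l2 = 1/2`. -/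
def TV.le (a b : TV) : Prop := a = b ∨ b = TV.half

/-- `v` is the least upper bound (join) of the set `A` in the information order. -/
def TV.IsJoin (A : Set TV) (v : TV) : Prop :=
  (∀ a ∈ A, TV.le a v) ∧ ∀ w, (∀ a ∈ A, TV.le a w) → TV.le v w

/-- A (relational) vocabulary: a set of predicate symbols with arities and a
designated binary equality symbol. -/
structure Voc : Type 1 where
  rel : Type
  ar : rel → ℕ
  eqr : rel
  eq_ar : ar eqr = 2

/-- The pair `(u, v)` as a tuple (used for binary predicates). -/
def pair {α : Type _} {n : ℕ} (u v : α) : Fin n → α :=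
  fun i => if (i : ℕ) = 0 then u else v

/-- A 3-valued logical structure over the vocabulary `σ`. -/
structure Str3 (σ : Voc) : Type 1 where
  U : Type
  ι : (r : σ.rel) → (Fin (σ.ar r) → U) → TV
  eq_refl : ∀ u : U, ι σ.eqr (pair u u) ≠ TV.zero
  eq_ne : ∀ u v : U, u ≠ v → ι σ.eqr (pair u v) = TV.zero

/-- A 2-valued logical structure over `σ`: all predicate values are definite and
the equality symbol is interpreted as true equality. -/
structure Str2 (σ : Voc) : Type 1 where
  U : Type
  ι : (r : σ.rel) → (Fin (σ.ar r) → U) → Bool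
  eq_iff : ∀ u v : U, ι σ.eqr (pair u v) = true ↔ u = v

/-- The value of a predicate of a 2-valued structure, seen as a truth value. -/
def Str2.tv {σ : Voc} (C : Str2 σ) (r : σ.rel) (t : Fin (σ.ar r) → C.U) : TV :=
  if C.ι r t then TV.one else TV.zero

/-- `f` embeds the 2-valued structure `C` into the 3-valued structure `S`:
`f` is surjective and every predicate value of `C` is ⊑ the corresponding
value of `S`. -/
def Embeds {σ : Voc} (C : Str2 σ) (S : Str3 σ) (f : C.U → S.U) : Prop :=
  Function.Surjective f ∧
    ∀ (r : σ.rel) (t : Fin (σ.ar r) → C.U), TV.le (C.tv r t) (S.ι r (f ∘ t))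

/-- First-order formulas with transitive closure over vocabulary `σ`, with
free variables drawn from `V`. -/
inductive Fml (σ : Voc) : Type → Type 1 where
  | tru {V : Type} : Fml σ V
  | atom {V : Type} (r : σ.rel) (ts : Fin (σ.ar r) → V) : Fml σ V
  | not {V : Type} : Fml σ V → Fml σ V
  | or {V : Type} : Fml σ V → Fml σ V → Fml σ V
  | ex {V : Type} : Fml σ (Option V) → Fml σ V
  | tc {V : Type} (φ : Fml σ (Option (Option V))) (a b : V) : Fml σ V

/-- Tarskian satisfaction of a formula in a 2-valued structure under an
assignment `ρ` of the free variables. -/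
def Str2.Sat {σ : Voc} (C : Str2 σ) : {V : Type} → (V → C.U) → Fml σ V → Prop
  | _, _, .tru => True
  | _, ρ, .atom r ts => C.ι r (ρ ∘ ts) = true
  | _, ρ, .not φ => ¬ C.Sat ρ φ
  | _, ρ, .or φ ψ => C.Sat ρ φ ∨ C.Sat ρ ψ
  | _, ρ, .ex φ => ∃ m : C.U, C.Sat (fun v => Option.elim v m ρ) φ
  | _, ρ, .tc φ a b =>
      Relation.TransGen
        (fun x y => C.Sat (fun v => Option.elim v y (fun v' => Option.elim v' x ρ)) φ)
        (ρ a) (ρ b)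

/-- Satisfaction of a closed formula. -/
def SatC {σ : Voc} (C : Str2 σ) (φ : Fml σ Empty) : Prop :=
  C.Sat (fun x => x.elim) φ

namespace Fml

def fls {σ : Voc} {V : Type} : Fml σ V := .not .tru

def and {σ : Voc} {V : Type} (φ ψ : Fml σ V) : Fml σ V := .not (.or (.not φ) (.not ψ))

def imp {σ : Voc} {V : Type} (φ ψ : Fml σ V) : Fml σ V := .or (.not φ) ψ

def all {σ : Voc} {V : Type} (φ : Fml σ (Option V)) : Fml σ V := .not (.ex (.not φ))

def conj {σ : Voc} {V : Type} (l : List (Fml σ V)) : Fml σ V := l.foldr .and .tru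

def disj {σ : Voc} {V : Type} (l : List (Fml σ V)) : Fml σ V := l.foldr .or .fls

/-- Renaming of free variables. -/
def map {σ : Voc} : {V W : Type} → (V → W) → Fml σ V → Fml σ W
  | _, _, _, .tru => .tru
  | _, _, g, .atom r ts => .atom r (g ∘ ts)
  | _, _, g, .not φ => .not (φ.map g)
  | _, _, g, .or φ ψ => .or (φ.map g) (ψ.map g)
  | _, _, g, .ex φ => .ex (φ.map (Option.map g))
  | _, _, g, .tc φ a b => .tc (φ.map (Option.map (Option.map g))) (g a) (g b)

end Fml

/-- The characteristic formula `p^B` of the truth value `B` for the predicate `p`: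
`p^0 := ¬p`, `p^1 := p`, `p^{1/2} := true`. -/
def charFml {σ : Voc} {V : Type} (p : σ.rel) (ts : Fin (σ.ar p) → V) : TV → Fml σ V
  | TV.zero => .not (.atom p ts)
  | TV.one => .atom p ts
  | TV.half => .tru

/-- `node` is a family of node formulas (one per node of `S`, with a single free
variable `w`) witnessing that `S` is FO-identifiable: for every 2-valued `C`
embedding into `S` via `f` and every concrete node `uh`, `f uh = u` iff `C`
satisfies `node u` under `[w ↦ uh]`. -/
def IsNodeFamily {σ : Voc} (S : Str3 σ) (node : S.U → Fml σ Unit) : Prop :=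
  ∀ (C : Str2 σ) (f : C.U → S.U), Embeds C S f →
    ∀ (uh : C.U) (u : S.U), f uh = u ↔ C.Sat (fun _ => uh) (node u)

/-- `S` is FO-identifiable. -/
def FOIdentifiable {σ : Voc} (S : Str3 σ) : Prop :=
  ∃ node : S.U → Fml σ Unit, IsNodeFamily S node

/-- Mutual exclusivity of a family of node formulas: in every 2-valued structure
that embeds into `S`, every concrete node satisfies at most one node formula. -/
def MutExcl {σ : Voc} (S : Str3 σ) (node : S.U → Fml σ Unit) : Prop :=
  ∀ C : Str2 σ, (∃ f : C.U → S.U, Embeds C S f) →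
    ∀ (uh : C.U) (u1 u2 : S.U), u1 ≠ u2 →
      ¬ (C.Sat (fun _ => uh) (node u1) ∧ C.Sat (fun _ => uh) (node u2))

/-- `S` is a bounded structure: any two distinct nodes are distinguished by a
unary predicate having distinct definite values on them. -/
def Bounded {σ : Voc} (S : Str3 σ) : Prop :=
  ∀ u1 u2 : S.U, u1 ≠ u2 →
    ∃ p : σ.rel, σ.ar p = 1 ∧
      S.ι p (fun _ => u1) ≠ S.ι p (fun _ => u2) ∧
      S.ι p (fun _ => u1) ≠ TV.half ∧ S.ι p (fun _ => u2) ≠ TV.half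

/-- The node formula `node^S_u(w) := ⋀_{p unary} p^{ι^S(p)(u)}(w)`. -/
noncomputable def boundedNode {σ : Voc} [Fintype σ.rel] (S : Str3 σ) (u : S.U) : Fml σ Unit :=
  Fml.conj
    (((Finset.univ : Finset {p : σ.rel // σ.ar p = 1}).toList).map
      (fun p => charFml p.1 (fun _ => ()) (S.ι p.1 (fun _ => u))))

/-- The conjunction `⋀_j node_{t j}(w_j)` over the components of a tuple of
abstract nodes, as a formula with free variables `w_1, …, w_n`. -/
def nodeTuple {σ : Voc} (S : Str3 σ) (node : S.U → Fml σ Unit) {n : ℕ}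
    (t : Fin n → S.U) : Fml σ (Fin n) :=
  Fml.conj (List.ofFn fun j : Fin n => (node (t j)).map (fun _ => j))

/-- Universal closure of a formula with `n` free variables. -/
def closeAll {σ : Voc} : {n : ℕ} → Fml σ (Fin n) → Fml σ Empty
  | 0, φ => φ.map Fin.elim0
  | _ + 1, φ =>
      closeAll (Fml.all (φ.map (fun i => Fin.lastCases none (fun j => some j) i)))

/-- Existential closure of a formula with `n` free variables. -/
def closeEx {σ : Voc} : {n : ℕ} → Fml σ (Fin n) → Fml σ Empty
  | 0, φ => φ.map Fin.elim0
  | _ + 1, φ =>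
      closeEx (Fml.ex (φ.map (fun i => Fin.lastCases none (fun j => some j) i)))

/-- `∃ v : node_u(v)`. -/
noncomputable def existsNode {σ : Voc} (S : Str3 σ) (node : S.U → Fml σ Unit) (u : S.U) :
    Fml σ Empty :=
  .ex ((node u).map (fun _ => (none : Option Empty)))

/-- The totality formula `∀ w : ⋁_i node_{u_i}(w)`. -/
noncomputable def xiTotal {σ : Voc} (S : Str3 σ) [Fintype S.U] (node : S.U → Fml σ Unit) :
    Fml σ Empty :=
  Fml.all (Fml.disj
    (((Finset.univ : Finset S.U).toList).map
      (fun u => (node u).map (fun _ => (none : Option Empty)))))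

/-- The nullary characteristic formula `⋀_{p nullary} p^{ι^S(p)()}`. -/
noncomputable def xiNullary {σ : Voc} [Fintype σ.rel] (S : Str3 σ) : Fml σ Empty :=
  Fml.conj
    (((Finset.univ : Finset σ.rel).toList).map (fun p =>
      if h : σ.ar p = 0 then
        charFml p (fun i => Fin.elim0 (Fin.cast h i))
          (S.ι p (fun i => Fin.elim0 (Fin.cast h i)))
      else .tru))

/-- The predicate characteristic formula
`∀ w1 … wr : ⋀_{tuples ū} ((⋀_j node_{ū j}(w_j)) → p^{ι^S(p)(ū)}(w̄))`. -/
noncomputable def xiPred {σ : Voc} (S : Str3 σ) [Fintype S.U] (node : S.U → Fml σ Unit)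
    (p : σ.rel) : Fml σ Empty :=
  closeAll (Fml.conj
    (((Finset.univ : Finset (Fin (σ.ar p) → S.U)).toList).map
      (fun t => Fml.imp (nodeTuple S node t)
        (charFml p (fun j => j) (S.ι p t)))))

/-- Conjunction of the predicate characteristic formulas over all predicates of
arity ≥ 1. -/
noncomputable def xiPredAll {σ : Voc} [Fintype σ.rel] (S : Str3 σ) [Fintype S.U]
    (node : S.U → Fml σ Unit) : Fml σ Empty :=
  Fml.conj
    (((Finset.univ : Finset σ.rel).toList).map (fun p =>
      if σ.ar p = 0 then .tru else xiPred S node p))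

/-- The first-order characteristic formula `ξ^S` of `S` (w.r.t. the node
formulas `node`). -/
noncomputable def xi {σ : Voc} [Fintype σ.rel] (S : Str3 σ) [Fintype S.U]
    (node : S.U → Fml σ Unit) : Fml σ Empty :=
  (Fml.conj (((Finset.univ : Finset S.U).toList).map (existsNode S node))).and
    ((xiTotal S node).and ((xiNullary S).and (xiPredAll S node)))

/-- The concretization `γ(S)`: the 2-valued structures that embed into `S` and
satisfy the integrity formula `F`. -/
def gammaSet {σ : Voc} (F : Fml σ Empty) (S : Str3 σ) : Set (Str2 σ) :=
  {C | (∃ f : C.U → S.U, Embeds C S f) ∧ SatC C F}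

/-- `S` is the canonical abstraction of the 2-valued structure `C` via `blur`:
`blur` is a surjective embedding that identifies exactly the concrete nodes with
equal canonical names (the values of the unary predicates), and every abstract
predicate value is the join of the concrete values it represents. -/
def IsCanonAbs {σ : Voc} (C : Str2 σ) (S : Str3 σ) (blur : C.U → S.U) : Prop :=
  Embeds C S blur ∧
    (∀ u v : C.U, blur u = blur v ↔
      ∀ p : σ.rel, σ.ar p = 1 → C.ι p (fun _ => u) = C.ι p (fun _ => v)) ∧
    ∀ (p : σ.rel) (t' : Fin (σ.ar p) → S.U),
      TV.IsJoin {b | ∃ t : Fin (σ.ar p) → C.U, blur ∘ t = t' ∧ C.tv p t = b}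
        (S.ι p t')

/-- `S` is an image of canonical abstraction. -/
def ICA {σ : Voc} (S : Str3 σ) : Prop :=
  ∃ (C : Str2 σ) (blur : C.U → S.U), IsCanonAbs C S blur

/-- The concretization of `S` under canonical abstraction. -/
def gammaC {σ : Voc} (F : Fml σ Empty) (S : Str3 σ) : Set (Str2 σ) :=
  {C | (∃ blur : C.U → S.U, IsCanonAbs C S blur) ∧ SatC C F}

/-- `node` is a family of node formulas witnessing canonical-FO-identifiability
of `S`. -/
def IsCanonNodeFamily {σ : Voc} (S : Str3 σ) (node : S.U → Fml σ Unit) : Prop :=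
  ∀ (C : Str2 σ) (blur : C.U → S.U), IsCanonAbs C S blur →
    ∀ (uh : C.U) (u : S.U), blur uh = u ↔ C.Sat (fun _ => uh) (node u)

/-- `τ^S[p]`: for every tuple where `p` has value 1/2, there are concrete
tuples (satisfying the node formulas) on which `p` holds, resp., fails. -/
noncomputable def tauPred {σ : Voc} (S : Str3 σ) [Fintype S.U] (node : S.U → Fml σ Unit)
    (p : σ.rel) : Fml σ Empty :=
  Fml.conj
    (((((Finset.univ : Finset (Fin (σ.ar p) → S.U)).toList).filter
        (fun t => decide (S.ι p t = TV.half))).map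
      (fun t =>
        (closeEx ((nodeTuple S node t).and (.atom p (fun j => j)))).and
          (closeEx ((nodeTuple S node t).and (.not (.atom p (fun j => j))))))))

/-- `τ^S := ξ^S ∧ ⋀_{p of arity ≥ 2} τ^S[p]`. -/
noncomputable def tau {σ : Voc} [Fintype σ.rel] (S : Str3 σ) [Fintype S.U]
    (node : S.U → Fml σ Unit) : Fml σ Empty :=
  (xi S node).and
    (Fml.conj (((Finset.univ : Finset σ.rel).toList).map (fun p =>
      if 2 ≤ σ.ar p then tauPred S node p else .tru)))

/-- Isomorphism of 3-valued structures. -/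
def Iso3 {σ : Voc} (S1 S2 : Str3 σ) : Prop :=
  ∃ e : S1.U ≃ S2.U,
    ∀ (p : σ.rel) (t : Fin (σ.ar p) → S1.U), S1.ι p t = S2.ι p (e ∘ t)

/-- Satisfaction of the NP (existential monadic second-order) characteristic
formula `ψ^S` of `S` in the 2-valued structure `C`: there exist sets `V_u`
(one per node `u` of `S`) that are nonempty, pairwise disjoint, and cover `C`,
such that the nullary and the predicate characteristic conjuncts hold with
`node_{u}(w) := w ∈ V_u`. -/
def SatNP {σ : Voc} (S : Str3 σ) (C : Str2 σ) : Prop :=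
  ∃ V : S.U → Set C.U,
    (∀ u : S.U, ∃ w, w ∈ V u) ∧
    (∀ u1 u2 : S.U, u1 ≠ u2 →
      ∀ w1 ∈ V u1, ∀ w2 ∈ V u2, ¬ C.ι σ.eqr (pair w1 w2) = true) ∧
    (∀ w : C.U, ∃ u : S.U, w ∈ V u) ∧
    (∀ (p : σ.rel) (h : σ.ar p = 0),
      TV.le (C.tv p (fun i => Fin.elim0 (Fin.cast h i)))
        (S.ι p (fun i => Fin.elim0 (Fin.cast h i)))) ∧
    (∀ (p : σ.rel), 1 ≤ σ.ar p →
      ∀ (t : Fin (σ.ar p) → C.U) (us : Fin (σ.ar p) → S.U),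
        (∀ j, t j ∈ V (us j)) → TV.le (C.tv p t) (S.ι p us))

/-!
In an image of canonical abstraction every predicate of arity at most one has a definite value at
every abstract tuple, and distinct abstract nodes have distinct canonical names. So the node
formula `node^S_u(w)` says exactly that `w` has the canonical name of `u`: a concrete node
satisfies at most one node formula, and the totality conjunct of `ξ^S` makes it satisfy exactly
one. This defines a map `blur`, relative to which `ξ^S` says that `blur` is an embedding and
`τ^S[p]` says that every value 1/2 of a predicate of arity at least two is the join of a 0 and
a 1. For predicates of arity at most one the join condition holds automatically, since all
concrete tuples over an abstract tuple share their canonical names.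
-/

section Semantics

variable {σ : Voc} (C : Str2 σ) {V : Type}

lemma sat_atom (ρ : V → C.U) (r : σ.rel) (ts : Fin (σ.ar r) → V) :
    C.Sat ρ (.atom r ts) ↔ C.ι r (ρ ∘ ts) = true := Iff.rfl

lemma sat_and (ρ : V → C.U) (φ ψ : Fml σ V) :
    C.Sat ρ (φ.and ψ) ↔ C.Sat ρ φ ∧ C.Sat ρ ψ := by
  simp only [Fml.and, Str2.Sat, not_or, not_not]

lemma satC_and (φ ψ : Fml σ Empty) : SatC C (φ.and ψ) ↔ SatC C φ ∧ SatC C ψ :=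
  sat_and C _ φ ψ

lemma sat_imp (ρ : V → C.U) (φ ψ : Fml σ V) :
    C.Sat ρ (φ.imp ψ) ↔ (C.Sat ρ φ → C.Sat ρ ψ) := by
  simp only [Fml.imp, Str2.Sat]
  exact imp_iff_not_or.symm

lemma sat_all (ρ : V → C.U) (φ : Fml σ (Option V)) :
    C.Sat ρ (Fml.all φ) ↔ ∀ m, C.Sat (fun v => Option.elim v m ρ) φ := by
  simp only [Fml.all, Str2.Sat, not_exists, not_not]

lemma sat_conj (ρ : V → C.U) (l : List (Fml σ V)) :
    C.Sat ρ (Fml.conj l) ↔ ∀ φ ∈ l, C.Sat ρ φ := by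
  induction l with
  | nil => simp [Fml.conj, Str2.Sat]
  | cons φ l ih =>
    change C.Sat ρ (φ.and (Fml.conj l)) ↔ _
    rw [sat_and, ih, List.forall_mem_cons]

lemma satC_conj (l : List (Fml σ Empty)) : SatC C (Fml.conj l) ↔ ∀ φ ∈ l, SatC C φ :=
  sat_conj C _ l

lemma sat_disj (ρ : V → C.U) (l : List (Fml σ V)) :
    C.Sat ρ (Fml.disj l) ↔ ∃ φ ∈ l, C.Sat ρ φ := by
  induction l with
  | nil => simp [Fml.disj, Fml.fls, Str2.Sat]
  | cons φ l ih =>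
    change C.Sat ρ (.or φ (Fml.disj l)) ↔ _
    rw [Str2.Sat, ih, List.exists_mem_cons_iff]

lemma Option.elim_comp_map {α β γ : Type _} (m : γ) (ρ : β → γ) (g : α → β) :
    (fun v => Option.elim v m ρ) ∘ Option.map g = fun v => Option.elim v m (ρ ∘ g) := by
  funext v
  cases v <;> rfl

lemma sat_map : ∀ {V W : Type} (φ : Fml σ V) (g : V → W) (ρ : W → C.U),
    C.Sat ρ (φ.map g) ↔ C.Sat (ρ ∘ g) φ
  | _, _, .tru, _, _ => Iff.rfl
  | _, _, .atom _ _, _, _ => Iff.rfl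
  | _, _, .not φ, g, ρ => not_congr (sat_map φ g ρ)
  | _, _, .or φ ψ, g, ρ => or_congr (sat_map φ g ρ) (sat_map ψ g ρ)
  | _, _, .ex φ, g, ρ => by
    simp only [Fml.map, Str2.Sat, sat_map φ, Option.elim_comp_map]
  | _, _, .tc φ a b, g, ρ => by
    simp only [Fml.map, Str2.Sat, sat_map φ, Option.elim_comp_map]
    rfl

lemma Option.elim_comp_lastCases {α : Type _} {n : ℕ} (ρ : Fin n → α) (m : α) :
    (fun v => Option.elim v m ρ) ∘
        (fun i : Fin (n + 1) => Fin.lastCases (motive := fun _ => Option (Fin n)) none some i)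
      = Fin.snoc ρ m := by
  funext i
  refine Fin.lastCases ?_ (fun j => ?_) i <;> simp

lemma sat_closeAll : ∀ {n : ℕ} (φ : Fml σ (Fin n)),
    SatC C (closeAll φ) ↔ ∀ ρ : Fin n → C.U, C.Sat ρ φ
  | 0, φ => by
    simp only [closeAll, SatC, sat_map]
    exact ⟨fun h ρ => Subsingleton.elim ((fun x : Empty => x.elim) ∘ Fin.elim0) ρ ▸ h,
      fun h => h _⟩
  | n + 1, φ => by
    simp only [closeAll, sat_closeAll, sat_all, sat_map, Option.elim_comp_lastCases]
    exact ⟨fun h ρ => Fin.snoc_init_self ρ ▸ h (Fin.init ρ) (ρ (Fin.last n)),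
      fun h ρ m => h _⟩

lemma sat_closeEx : ∀ {n : ℕ} (φ : Fml σ (Fin n)),
    SatC C (closeEx φ) ↔ ∃ ρ : Fin n → C.U, C.Sat ρ φ
  | 0, φ => by
    simp only [closeEx, SatC, sat_map]
    exact ⟨fun h => ⟨_, h⟩,
      fun ⟨ρ, h⟩ => Subsingleton.elim ρ ((fun x : Empty => x.elim) ∘ Fin.elim0) ▸ h⟩
  | n + 1, φ => by
    simp only [closeEx, sat_closeEx, Str2.Sat, sat_map, Option.elim_comp_lastCases]
    exact ⟨fun ⟨_, _, h⟩ => ⟨_, h⟩,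
      fun ⟨ρ, h⟩ => ⟨Fin.init ρ, ρ (Fin.last n), (Fin.snoc_init_self ρ).symm ▸ h⟩⟩

lemma sat_charFml (p : σ.rel) (ts : Fin (σ.ar p) → V) (b : TV) (ρ : V → C.U) :
    C.Sat ρ (charFml p ts b) ↔ TV.le (C.tv p (ρ ∘ ts)) b := by
  cases b <;> cases h : C.ι p (ρ ∘ ts) <;> simp [charFml, Str2.Sat, Str2.tv, TV.le, h]

lemma sat_nodeTuple {S : Str3 σ} (node : S.U → Fml σ Unit) {n : ℕ} (t : Fin n → S.U)
    (ρ : Fin n → C.U) :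
    C.Sat ρ (nodeTuple S node t) ↔ ∀ j, C.Sat (fun _ => ρ j) (node (t j)) := by
  simp only [nodeTuple, sat_conj, List.forall_mem_ofFn_iff, sat_map]
  rfl

lemma sat_boundedNode [Fintype σ.rel] (S : Str3 σ) (u : S.U) (w : C.U) :
    C.Sat (fun _ => w) (boundedNode S u) ↔
      ∀ p, σ.ar p = 1 → TV.le (C.tv p (fun _ => w)) (S.ι p (fun _ => u)) := by
  simp only [boundedNode, sat_conj, List.forall_mem_map, Finset.mem_toList, Finset.mem_univ,
    forall_const, sat_charFml, Subtype.forall]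
  rfl

end Semantics

namespace TV

lemma le_antisymm {a b : TV} (hab : TV.le a b) (hba : TV.le b a) : a = b := by
  rcases hab with hab | rfl
  · exact hab
  · exact hba.elim Eq.symm id

lemma le_iff_eq {a b : TV} (hb : b ≠ TV.half) : TV.le a b ↔ a = b :=
  ⟨fun h => h.resolve_right hb, fun h => Or.inl h⟩

lemma IsJoin.unique {A : Set TV} {v w : TV} (hv : TV.IsJoin A v) (hw : TV.IsJoin A w) :
    v = w :=
  le_antisymm (hv.2 w hw.1) (hw.2 v hv.1)

lemma isJoin_of_mem {A : Set TV} {v : TV} (hv : v ∈ A) (hub : ∀ a ∈ A, TV.le a v) :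
    TV.IsJoin A v :=
  ⟨hub, fun _ hw => hw v hv⟩

lemma isJoin_half_iff {A : Set TV} (hA : TV.half ∉ A) :
    TV.IsJoin A TV.half ↔ TV.one ∈ A ∧ TV.zero ∈ A := by
  refine ⟨fun h => ⟨?_, ?_⟩, fun ⟨h1, h0⟩ => ⟨fun _ _ => Or.inr rfl, fun w hw => ?_⟩⟩
  · by_contra h1
    have := h.2 TV.zero fun a ha => by cases a <;> simp_all [TV.le]
    simp [TV.le] at this
  · by_contra h0
    have := h.2 TV.one fun a ha => by cases a <;> simp_all [TV.le]
    simp [TV.le] at this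
  · have e1 := hw _ h1
    have e0 := hw _ h0
    cases w <;> simp [TV.le] at e1 e0 ⊢

end TV

namespace Str2

variable {σ : Voc} (C : Str2 σ) (r : σ.rel) (t t' : Fin (σ.ar r) → C.U)

lemma tv_ne_half : C.tv r t ≠ TV.half := by
  unfold Str2.tv; split <;> simp

lemma tv_eq_one_iff : C.tv r t = TV.one ↔ C.ι r t = true := by
  unfold Str2.tv; split <;> simp_all

lemma tv_eq_zero_iff : C.tv r t = TV.zero ↔ C.ι r t = false := by
  unfold Str2.tv; split <;> simp_all

lemma tv_eq_tv_iff : C.tv r t = C.tv r t' ↔ C.ι r t = C.ι r t' := by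
  unfold Str2.tv; cases C.ι r t <;> cases C.ι r t' <;> simp

end Str2

def NodeFormulasDefine {σ : Voc} {S : Str3 σ} (C : Str2 σ) (node : S.U → Fml σ Unit)
    (blur : C.U → S.U) : Prop :=
  ∀ w u, blur w = u ↔ C.Sat (fun _ => w) (node u)

section CanonicalAbstraction

variable {σ : Voc} {C : Str2 σ} {S : Str3 σ} {blur : C.U → S.U}

namespace IsCanonAbs

lemma tv_eq_of_comp_eq (h : IsCanonAbs C S blur) {p : σ.rel} (hp : σ.ar p ≤ 1)
    {t₁ t₂ : Fin (σ.ar p) → C.U} (ht : blur ∘ t₁ = blur ∘ t₂) : C.tv p t₁ = C.tv p t₂ := by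
  rcases Nat.le_one_iff_eq_zero_or_eq_one.mp hp with hp0 | hp1
  · rw [show t₁ = t₂ from funext fun i => (Fin.cast hp0 i).elim0]
  · have hconst : ∀ t : Fin (σ.ar p) → C.U, t = fun _ => t ⟨0, by omega⟩ :=
      fun t => funext fun i => congrArg t (Fin.ext (by omega))
    rw [hconst t₁, hconst t₂, Str2.tv_eq_tv_iff]
    exact (h.2.1 _ _).mp (congrFun ht _) p hp1

lemma ι_comp_eq_tv (h : IsCanonAbs C S blur) {p : σ.rel} (hp : σ.ar p ≤ 1)
    (t : Fin (σ.ar p) → C.U) : S.ι p (blur ∘ t) = C.tv p t := by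
  refine TV.IsJoin.unique (h.2.2 p _) (TV.isJoin_of_mem ⟨t, rfl, rfl⟩ ?_)
  rintro _ ⟨t', ht', rfl⟩
  exact Or.inl (h.tv_eq_of_comp_eq hp ht')

lemma ι_ne_half (h : IsCanonAbs C S blur) {p : σ.rel} (hp : σ.ar p ≤ 1)
    (t' : Fin (σ.ar p) → S.U) : S.ι p t' ≠ TV.half := by
  obtain ⟨t, rfl⟩ := h.1.1.comp_left t'
  rw [h.ι_comp_eq_tv hp]
  exact C.tv_ne_half p t

lemma blur_eq_iff (h : IsCanonAbs C S blur) {w : C.U} {u : S.U} :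
    blur w = u ↔ ∀ p, σ.ar p = 1 → C.tv p (fun _ => w) = S.ι p (fun _ => u) := by
  refine ⟨?_, fun hw => ?_⟩
  · rintro rfl p hp
    exact (h.ι_comp_eq_tv hp.le _).symm
  · obtain ⟨w', rfl⟩ := h.1.1 u
    refine (h.2.1 w w').mpr fun p hp => (C.tv_eq_tv_iff p _ _).mp ?_
    exact (hw p hp).trans (h.ι_comp_eq_tv hp.le _)

lemma eq_of_forall_unary_eq (h : IsCanonAbs C S blur) {u₁ u₂ : S.U}
    (hu : ∀ p, σ.ar p = 1 → S.ι p (fun _ => u₁) = S.ι p (fun _ => u₂)) : u₁ = u₂ := by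
  obtain ⟨w, rfl⟩ := h.1.1 u₁
  exact h.blur_eq_iff.mpr fun p hp => (h.blur_eq_iff.mp rfl p hp).trans (hu p hp)

end IsCanonAbs

lemma ICA.ι_ne_half (hS : ICA S) {p : σ.rel} (hp : σ.ar p ≤ 1) (t' : Fin (σ.ar p) → S.U) :
    S.ι p t' ≠ TV.half :=
  let ⟨_, _, h⟩ := hS
  h.ι_ne_half hp t'

lemma ICA.eq_of_forall_unary_eq (hS : ICA S) {u₁ u₂ : S.U}
    (hu : ∀ p, σ.ar p = 1 → S.ι p (fun _ => u₁) = S.ι p (fun _ => u₂)) : u₁ = u₂ :=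
  let ⟨_, _, h⟩ := hS
  h.eq_of_forall_unary_eq hu

def RealizesHalves (C : Str2 σ) (S : Str3 σ) (blur : C.U → S.U) (p : σ.rel) : Prop :=
  ∀ t' : Fin (σ.ar p) → S.U, S.ι p t' = TV.half →
    (∃ t, blur ∘ t = t' ∧ C.tv p t = TV.one) ∧ ∃ t, blur ∘ t = t' ∧ C.tv p t = TV.zero

lemma IsCanonAbs.realizesHalves (h : IsCanonAbs C S blur) (p : σ.rel) :
    RealizesHalves C S blur p := by
  intro t' ht'
  refine (TV.isJoin_half_iff ?_).mp (ht' ▸ h.2.2 p t')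
  rintro ⟨t, -, ht⟩
  exact C.tv_ne_half p t ht

lemma isCanonAbs_of_embeds (hS : ICA S) (hemb : Embeds C S blur)
    (hblur : ∀ w u, blur w = u ↔ ∀ p, σ.ar p = 1 → C.tv p (fun _ => w) = S.ι p (fun _ => u))
    (hhalf : ∀ p, 2 ≤ σ.ar p → RealizesHalves C S blur p) : IsCanonAbs C S blur := by
  refine ⟨hemb, fun w w' => ?_, fun p t' => ?_⟩
  · rw [eq_comm, hblur w' (blur w)]
    refine forall₂_congr fun p hp => ?_
    rw [← (hblur w _).mp rfl p hp, Str2.tv_eq_tv_iff]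
    exact eq_comm
  by_cases ht' : S.ι p t' = TV.half
  · have hp : 2 ≤ σ.ar p := by
      by_contra hp
      exact hS.ι_ne_half (by omega) t' ht'
    rw [ht', TV.isJoin_half_iff (by rintro ⟨t, -, ht⟩; exact C.tv_ne_half p t ht)]
    exact hhalf p hp t' ht'
  · obtain ⟨t, rfl⟩ := hemb.1.comp_left t'
    refine TV.isJoin_of_mem ⟨t, rfl, (TV.le_iff_eq ht').mp (hemb.2 p t)⟩ ?_
    rintro _ ⟨t₂, ht₂, rfl⟩
    exact ht₂ ▸ hemb.2 p t₂

variable [Fintype σ.rel]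

lemma ICA.sat_boundedNode_iff (hS : ICA S) {w : C.U} {u : S.U} :
    C.Sat (fun _ => w) (boundedNode S u) ↔
      ∀ p, σ.ar p = 1 → C.tv p (fun _ => w) = S.ι p (fun _ => u) := by
  rw [sat_boundedNode]
  exact forall₂_congr fun p hp => TV.le_iff_eq (hS.ι_ne_half hp.le _)

lemma ICA.eq_of_sat_boundedNode (hS : ICA S) {w : C.U} {u₁ u₂ : S.U}
    (h₁ : C.Sat (fun _ => w) (boundedNode S u₁))
    (h₂ : C.Sat (fun _ => w) (boundedNode S u₂)) : u₁ = u₂ :=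
  hS.eq_of_forall_unary_eq fun p hp =>
    (hS.sat_boundedNode_iff.mp h₁ p hp).symm.trans (hS.sat_boundedNode_iff.mp h₂ p hp)

lemma IsCanonAbs.nodeFormulasDefine (h : IsCanonAbs C S blur) :
    NodeFormulasDefine C (boundedNode S) blur := fun _ _ =>
  h.blur_eq_iff.trans (ICA.sat_boundedNode_iff ⟨C, blur, h⟩).symm

end CanonicalAbstraction

section CharacteristicFormula

variable {σ : Voc} {C : Str2 σ} {S : Str3 σ} {node : S.U → Fml σ Unit} {blur : C.U → S.U}

lemma sat_nodeTuple_iff_comp_eq (hnode : NodeFormulasDefine C node blur)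
    {n : ℕ} (t : Fin n → S.U) (ρ : Fin n → C.U) :
    C.Sat ρ (nodeTuple S node t) ↔ blur ∘ ρ = t := by
  rw [sat_nodeTuple, funext_iff]
  exact forall_congr' fun j => (hnode (ρ j) (t j)).symm

lemma satC_xiNullary [Fintype σ.rel] (f : C.U → S.U) :
    SatC C (xiNullary S) ↔ ∀ p, σ.ar p = 0 → ∀ t, TV.le (C.tv p t) (S.ι p (f ∘ t)) := by
  simp only [xiNullary, satC_conj, List.forall_mem_map, Finset.mem_toList, Finset.mem_univ,
    forall_const]
  refine forall_congr' fun p => ?_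
  split_ifs with hp
  · have htuple : ∀ {α : Type} (t t' : Fin (σ.ar p) → α), t = t' :=
      fun _ _ => funext fun i => (Fin.cast hp i).elim0
    rw [SatC, sat_charFml, forall_prop_of_true hp]
    exact ⟨fun h t => by convert h using 2 <;> exact htuple _ _,
      fun h => by convert h _ using 2; exact htuple _ _⟩
  · simp [hp, SatC, Str2.Sat]

variable [Fintype S.U]

lemma satC_xiTotal :
    SatC C (xiTotal S node) ↔ ∀ w, ∃ u, C.Sat (fun _ => w) (node u) := by
  simp only [xiTotal, SatC, sat_all, sat_disj, List.mem_map, exists_exists_eq_and,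
    Finset.mem_toList, Finset.mem_univ, true_and, sat_map]
  rfl

lemma satC_xiPred (hnode : NodeFormulasDefine C node blur) (p : σ.rel) :
    SatC C (xiPred S node p) ↔ ∀ t, TV.le (C.tv p t) (S.ι p (blur ∘ t)) := by
  simp only [xiPred, sat_closeAll, sat_conj, List.forall_mem_map, Finset.mem_toList,
    Finset.mem_univ, forall_const, sat_imp, sat_nodeTuple_iff_comp_eq hnode, sat_charFml,
    forall_eq']
  rfl

lemma satC_tauPred (hnode : NodeFormulasDefine C node blur) (p : σ.rel) :
    SatC C (tauPred S node p) ↔ RealizesHalves C S blur p := by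
  simp only [tauPred, satC_conj, List.forall_mem_map, List.mem_filter, Finset.mem_toList,
    Finset.mem_univ, true_and, decide_eq_true_eq, satC_and, sat_closeEx, sat_and,
    sat_nodeTuple_iff_comp_eq hnode, Str2.Sat, Function.comp_def, RealizesHalves,
    Str2.tv_eq_one_iff, Str2.tv_eq_zero_iff, Bool.not_eq_true]

variable [Fintype σ.rel]

lemma satC_xiPredAll (hnode : NodeFormulasDefine C node blur) :
    SatC C (xiPredAll S node) ↔
      ∀ p, σ.ar p ≠ 0 → ∀ t, TV.le (C.tv p t) (S.ι p (blur ∘ t)) := by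
  simp only [xiPredAll, satC_conj, List.forall_mem_map, Finset.mem_toList,
    Finset.mem_univ, forall_const]
  refine forall_congr' fun p => ?_
  split_ifs with hp
  · simp [hp, SatC, Str2.Sat]
  · simp only [hp, ne_eq, not_false_eq_true, forall_const, satC_xiPred hnode]

lemma satC_xi (hnode : NodeFormulasDefine C node blur) :
    SatC C (xi S node) ↔ Embeds C S blur := by
  have hsurj :
      SatC C (Fml.conj ((Finset.univ : Finset S.U).toList.map (existsNode S node))) ↔
        Function.Surjective blur := by
    simp only [satC_conj, List.forall_mem_map, Finset.mem_toList, Finset.mem_univ,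
      forall_const]
    simp only [existsNode, SatC, Str2.Sat, sat_map]
    exact forall_congr' fun u => exists_congr fun w => (hnode w u).symm
  have htotal : SatC C (xiTotal S node) :=
    satC_xiTotal.mpr fun w => ⟨blur w, (hnode w _).mp rfl⟩
  have hvalues : SatC C (xiNullary S) ∧ SatC C (xiPredAll S node) ↔
      ∀ r t, TV.le (C.tv r t) (S.ι r (blur ∘ t)) := by
    rw [satC_xiNullary blur, satC_xiPredAll hnode, ← forall_and]
    refine forall_congr' fun r => ?_
    by_cases hr : σ.ar r = 0 <;> simp [hr]
  rw [xi, satC_and, satC_and, satC_and, hsurj, hvalues, Embeds]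
  exact and_congr_right fun _ => and_iff_right htotal

lemma satC_tau (hnode : NodeFormulasDefine C node blur) :
    SatC C (tau S node) ↔
      Embeds C S blur ∧ ∀ p, 2 ≤ σ.ar p → RealizesHalves C S blur p := by
  simp only [tau, satC_and, satC_xi hnode, satC_conj, List.forall_mem_map, Finset.mem_toList,
    Finset.mem_univ, forall_const]
  refine and_congr_right fun _ => forall_congr' fun p => ?_
  split_ifs with hp
  · simp only [satC_tauPred hnode, hp, forall_const]
  · simp [hp, SatC, Str2.Sat]

lemma exists_sat_node_of_satC_tau (h : SatC C (tau S node)) (w : C.U) :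
    ∃ u, C.Sat (fun _ => w) (node u) := by
  rw [tau, xi, satC_and, satC_and, satC_and] at h
  exact satC_xiTotal.mp h.1.2.1 w

end CharacteristicFormula

lemma exists_isCanonAbs_iff_satC_tau {σ : Voc} [Fintype σ.rel] {S : Str3 σ} [Fintype S.U]
    (hS : ICA S) (C : Str2 σ) :
    (∃ blur, IsCanonAbs C S blur) ↔ SatC C (tau S (boundedNode S)) := by
  refine ⟨fun ⟨blur, h⟩ => ?_, fun htau => ?_⟩
  · exact (satC_tau h.nodeFormulasDefine).mpr ⟨h.1, fun p _ => h.realizesHalves p⟩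
  · choose blur hblur using exists_sat_node_of_satC_tau htau
    have hnode : NodeFormulasDefine C (boundedNode S) blur :=
      fun w u => ⟨fun h => h ▸ hblur w, hS.eq_of_sat_boundedNode (hblur w)⟩
    obtain ⟨hemb, hhalf⟩ := (satC_tau hnode).mp htau
    exact ⟨blur, isCanonAbs_of_embeds hS hemb
      (fun w u => (hnode w u).trans hS.sat_boundedNode_iff) hhalf⟩

/-- for every ICA structure `S` and 2-valued structure `C`:
`C ∈ γ_c(S)` iff `C ⊨ γ̂_c(S) = F ∧ τ^S`. -/
theorem mem_gammaC_iff_sat_gammaHatC {σ : Voc} [Fintype σ.rel] (F : Fml σ Empty)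
    (S : Str3 σ) [Fintype S.U] (hICA : ICA S) (C : Str2 σ) :
    C ∈ gammaC F S ↔ SatC C (F.and (tau S (boundedNode S))) := by
  rw [satC_and, ← exists_isCanonAbs_iff_satC_tau hICA C]
  exact and_comm

end HeapAbs
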